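/- arXiv:1312.1976 — 2 statements merged into one kernel-verified Lean document; each statement's English description precedes it below -/
import Mathlib

section
/- For β>0, 0<s₁<s₂, and θ∈(-π,π], |P(e^{-s₂+iθ};β) - P(e^{-s₁+iθ};β)| ≤ (s₂-s₁)/(cosh s₁ + cos θ), where P(e^{-s+iθ};β) := -p_θ(s) + β∫₀^∞ e^{-βt} p_θ(t+s) dt and p_θ(t)=1/(1+e^{-t+iθ}). -/
open MeasureTheory
open Set

noncomputable def qq (θ : ℝ) (t : ℝ) : ℂ := 1 / (1 + Complex.exp (-(t : ℂ) + θ * Complex.I))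

lemma abs_expz (θ t : ℝ) :
    ‖Complex.exp (-(t : ℂ) + θ * Complex.I)‖ = Real.exp (-t) := by
  rw [Complex.norm_exp]
  congr 1
  simp

lemma denom_lb (θ : ℝ) (t : ℝ) :
    1 - Real.exp (-t) ≤ ‖1 + Complex.exp (-(t : ℂ) + θ * Complex.I)‖ := by
  have h := norm_sub_le (1 + Complex.exp (-(t:ℂ) + θ * Complex.I))
      (Complex.exp (-(t:ℂ) + θ * Complex.I))
  simp only [add_sub_cancel_right] at h
  have h1 : ‖(1:ℂ)‖ = 1 := by simp
  have := abs_expz θ t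
  rw [h1, this] at h
  linarith

lemma denom_ne (θ : ℝ) {t : ℝ} (ht : 0 < t) :
    1 + Complex.exp (-(t : ℂ) + θ * Complex.I) ≠ 0 := by
  have h := denom_lb θ t
  have : Real.exp (-t) < 1 := by
    rw [Real.exp_lt_one_iff]; linarith
  intro h0
  rw [h0] at h
  simp at h
  linarith

lemma normSq_denom (θ t : ℝ) :
    ‖1 + Complex.exp (-(t : ℂ) + θ * Complex.I)‖ ^ 2
      = 2 * Real.exp (-t) * (Real.cosh t + Real.cos θ) := by
  rw [Complex.sq_norm, Complex.normSq_apply]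
  have hre : (1 + Complex.exp (-(t:ℂ) + θ * Complex.I)).re
      = 1 + Real.exp (-t) * Real.cos θ := by
    simp [Complex.exp_re]
  have him : (1 + Complex.exp (-(t:ℂ) + θ * Complex.I)).im
      = Real.exp (-t) * Real.sin θ := by
    simp [Complex.exp_im]
  rw [hre, him]
  have hpy : Real.sin θ ^ 2 + Real.cos θ ^ 2 = 1 := Real.sin_sq_add_cos_sq θ
  have hcosh : Real.cosh t = (Real.exp t + Real.exp (-t)) / 2 := Real.cosh_eq t
  have he : Real.exp (-t) * Real.exp t = 1 := by
    rw [← Real.exp_add]; simp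
  linear_combination (Real.exp (-t))^2 * hpy - 2*Real.exp (-t) * hcosh - he

lemma hasDeriv_qq (θ : ℝ) {t : ℝ} (ht : 0 < t) :
    HasDerivAt (qq θ)
      (Complex.exp (-(t:ℂ) + θ * Complex.I) / (1 + Complex.exp (-(t:ℂ) + θ * Complex.I)) ^ 2) t := by
  have hlin : HasDerivAt (fun u : ℝ => -(u : ℂ) + θ * Complex.I) (-1) t := by
    have h1 : HasDerivAt (fun u : ℝ => (u : ℂ)) 1 t := Complex.ofRealCLM.hasDerivAt
    simpa using (h1.neg.add_const (θ * Complex.I))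
  have hexp : HasDerivAt (fun u : ℝ => Complex.exp (-(u:ℂ) + θ * Complex.I))
      (-Complex.exp (-(t:ℂ) + θ * Complex.I)) t := by
    simpa [mul_comm] using hlin.cexp
  have hadd : HasDerivAt (fun u : ℝ => 1 + Complex.exp (-(u:ℂ) + θ * Complex.I))
      (-Complex.exp (-(t:ℂ) + θ * Complex.I)) t := hexp.const_add 1
  have hinv := ((hasFDerivAt_inv (denom_ne θ ht)).restrictScalars ℝ).comp_hasDerivAt t hadd
  have h2 : HasDerivAt (fun u : ℝ => (1 + Complex.exp (-(u:ℂ) + θ * Complex.I))⁻¹)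
      ((-Complex.exp (-(t:ℂ) + θ * Complex.I)) •
        (-((1 + Complex.exp (-(t:ℂ) + θ * Complex.I)) ^ 2)⁻¹)) t := by
    simpa [Function.comp_def] using hinv
  have h3 : ((-Complex.exp (-(t:ℂ) + θ * Complex.I)) •
        (-((1 + Complex.exp (-(t:ℂ) + θ * Complex.I)) ^ 2)⁻¹))
      = Complex.exp (-(t:ℂ) + θ * Complex.I)
        / (1 + Complex.exp (-(t:ℂ) + θ * Complex.I)) ^ 2 := by
    simp [smul_eq_mul, div_eq_mul_inv]
  rw [h3] at h2
  have hq : qq θ = fun u : ℝ => (1 + Complex.exp (-(u:ℂ) + θ * Complex.I))⁻¹ := by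
    funext u; simp [qq, one_div]
  rw [hq]
  exact h2

lemma abs_deriv_qq (θ : ℝ) {t : ℝ} (ht : 0 < t) (hD : 0 < Real.cosh t + Real.cos θ) :
    ‖Complex.exp (-(t:ℂ) + θ * Complex.I)
      / (1 + Complex.exp (-(t:ℂ) + θ * Complex.I)) ^ 2‖
      = 1 / (2 * (Real.cosh t + Real.cos θ)) := by
  rw [norm_div, norm_pow, abs_expz, normSq_denom]
  have hexp := Real.exp_pos (-t)
  field_simp

lemma coshD_pos (θ : ℝ) {s : ℝ} (hs : 0 < s) : 0 < Real.cosh s + Real.cos θ := by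
  have h1 : 1 < Real.cosh s := Real.one_lt_cosh.2 (ne_of_gt hs)
  have h2 : -1 ≤ Real.cos θ := Real.neg_one_le_cos θ
  linarith

lemma qq_mvt (θ s₁ : ℝ) (hs₁ : 0 < s₁) {a b : ℝ} (ha : s₁ ≤ a) (hab : a ≤ b) :
    ‖qq θ b - qq θ a‖ ≤ (b - a) / (2 * (Real.cosh s₁ + Real.cos θ)) := by
  have hD := coshD_pos θ hs₁
  set C : ℝ := 1 / (2 * (Real.cosh s₁ + Real.cos θ)) with hC
  have key := norm_image_sub_le_of_norm_deriv_le_segment'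
    (f := qq θ)
    (f' := fun x => Complex.exp (-(x:ℂ) + θ * Complex.I)
      / (1 + Complex.exp (-(x:ℂ) + θ * Complex.I)) ^ 2)
    (a := a) (b := b) (C := C)
    (fun x hx => ((hasDeriv_qq θ (lt_of_lt_of_le hs₁ (le_trans ha hx.1))).hasDerivWithinAt))
    (fun x hx => by
      have hx0 : 0 < x := lt_of_lt_of_le hs₁ (le_trans ha hx.1)
      have hDx : 0 < Real.cosh x + Real.cos θ := coshD_pos θ hx0
      rw [abs_deriv_qq θ hx0 hDx, hC]
      apply one_div_le_one_div_of_le (by linarith)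
      have : Real.cosh s₁ ≤ Real.cosh x := by
        rw [Real.cosh_le_cosh]
        rw [abs_of_pos hs₁, abs_of_pos hx0]
        linarith [hx.1]
      linarith)
    b (right_mem_Icc.2 hab)
  calc ‖qq θ b - qq θ a‖ ≤ C * (b - a) := key
    _ = (b - a) / (2 * (Real.cosh s₁ + Real.cos θ)) := by rw [hC]; ring

lemma qq_bound (θ : ℝ) {s t : ℝ} (hs : 0 < s) (hts : s ≤ t) :
    ‖qq θ t‖ ≤ (1 - Real.exp (-s))⁻¹ := by
  have h1 : Real.exp (-t) ≤ Real.exp (-s) := Real.exp_le_exp.2 (by linarith)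
  have h2 : Real.exp (-s) < 1 := by rw [Real.exp_lt_one_iff]; linarith
  have h3 : 0 < 1 - Real.exp (-s) := by linarith
  have h4 : 1 - Real.exp (-s) ≤ ‖1 + Complex.exp (-(t:ℂ) + θ * Complex.I)‖ := by
    have := denom_lb θ t
    linarith
  rw [qq, norm_div]
  simp only [norm_one]
  rw [div_eq_mul_inv, one_mul]
  exact inv_anti₀ h3 h4

lemma qq_contOn (θ s : ℝ) (hs : 0 < s) :
    ContinuousOn (fun t : ℝ => qq θ (t + s)) (Ioi 0) := by
  simp only [qq]
  apply ContinuousOn.div continuousOn_const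
  · exact (Continuous.continuousOn (by continuity))
  · intro t ht
    exact denom_ne θ (by simp at ht; linarith)

lemma integrable_q (θ β s : ℝ) (hβ : 0 < β) (hs : 0 < s) :
    IntegrableOn (fun t : ℝ => ((Real.exp (-β * t) : ℝ) : ℂ) * qq θ (t + s)) (Ioi 0) := by
  have hg : IntegrableOn (fun t : ℝ => Real.exp (-β * t) * (1 - Real.exp (-s))⁻¹) (Ioi 0) :=
    (exp_neg_integrableOn_Ioi 0 hβ).mul_const _
  apply Integrable.mono' hg
  · apply ContinuousOn.aestronglyMeasurable _ measurableSet_Ioi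
    exact ((Complex.continuous_ofReal.comp (Real.continuous_exp.comp (by continuity))).continuousOn).mul
      (qq_contOn θ s hs)
  · rw [ae_restrict_iff' measurableSet_Ioi]
    filter_upwards with t
    intro ht
    simp only [norm_mul, Complex.norm_real, Real.norm_eq_abs]
    rw [abs_of_pos (Real.exp_pos _)]
    apply mul_le_mul_of_nonneg_left _ (le_of_lt (Real.exp_pos _))
    exact qq_bound θ hs (by simp at ht; linarith)

lemma int_exp_Ioi (β : ℝ) (hβ : 0 < β) :
    ∫ t in Ioi (0:ℝ), Real.exp (-β * t) = 1 / β := by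
  have h := integral_Ioi_of_hasDerivAt_of_tendsto' (a := (0:ℝ))
    (f := fun x => -Real.exp (-β * x) / β) (f' := fun x => Real.exp (-β * x))
    (m := 0)
    (fun x _ => by
      have : HasDerivAt (fun x => Real.exp (-β * x)) (-β * Real.exp (-β * x)) x := by
        simpa [mul_comm] using ((hasDerivAt_id x).const_mul (-β)).exp
      have := (this.neg).div_const β
      exact this.congr_deriv (by rw [div_eq_iff hβ.ne']; ring))
    (exp_neg_integrableOn_Ioi 0 hβ)
    (by
      have : Filter.Tendsto (fun x : ℝ => Real.exp (-β * x)) Filter.atTop (nhds 0) := by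
        apply Real.tendsto_exp_atBot.comp
        exact Filter.Tendsto.const_mul_atTop_of_neg (neg_lt_zero.2 hβ) Filter.tendsto_id
      simpa using (this.neg.div_const β))
  rw [h]
  field_simp
  simp

/-- |P(e^{-s₂+iθ};β) - P(e^{-s₁+iθ};β)| ≤ (s₂-s₁)/(cosh s₁ + cos θ). -/
theorem P_diff_bound (s₁ s₂ θ β : ℝ) (hs₁ : 0 < s₁) (hs : s₁ < s₂)
    (hθ₁ : -Real.pi < θ) (hθ₂ : θ ≤ Real.pi) (hβ : 0 < β)
    (p : ℝ → ℂ) (hp : ∀ t, p t = 1 / (1 + Complex.exp (-(t : ℂ) + θ * Complex.I)))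
    (P : ℝ → ℂ)
    (hP : ∀ s, P s = -p s + β * ∫ t in Set.Ioi (0:ℝ), ((Real.exp (-β * t) : ℝ) : ℂ) * p (t + s)) :
    ‖P s₂ - P s₁‖ ≤ (s₂ - s₁) / (Real.cosh s₁ + Real.cos θ) := by
  have hD : 0 < Real.cosh s₁ + Real.cos θ := coshD_pos θ hs₁
  have hs₂ : 0 < s₂ := hs₁.trans hs
  have hpq : p = qq θ := funext fun t => hp t
  subst hpq
  set M : ℝ := (s₂ - s₁) / (2 * (Real.cosh s₁ + Real.cos θ)) with hM
  have hint : ∀ s : ℝ, 0 < s →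
      IntegrableOn (fun t : ℝ => ((Real.exp (-β * t) : ℝ) : ℂ) * qq θ (t + s)) (Ioi 0) :=
    fun s hs0 => integrable_q θ β s hβ hs0
  have hdiff : P s₂ - P s₁ = (qq θ s₁ - qq θ s₂)
      + (β : ℂ) * ((∫ t in Ioi (0:ℝ), ((Real.exp (-β * t) : ℝ) : ℂ) * qq θ (t + s₂))
        - (∫ t in Ioi (0:ℝ), ((Real.exp (-β * t) : ℝ) : ℂ) * qq θ (t + s₁))) := by
    rw [hP, hP]; ring
  have hsub : (∫ t in Ioi (0:ℝ), ((Real.exp (-β * t) : ℝ) : ℂ) * qq θ (t + s₂))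
        - (∫ t in Ioi (0:ℝ), ((Real.exp (-β * t) : ℝ) : ℂ) * qq θ (t + s₁))
      = ∫ t in Ioi (0:ℝ), (((Real.exp (-β * t) : ℝ) : ℂ) * qq θ (t + s₂)
          - ((Real.exp (-β * t) : ℝ) : ℂ) * qq θ (t + s₁)) :=
    (integral_sub (hint s₂ hs₂) (hint s₁ hs₁)).symm
  have hIbound : ‖∫ t in Ioi (0:ℝ), (((Real.exp (-β * t) : ℝ) : ℂ) * qq θ (t + s₂)
          - ((Real.exp (-β * t) : ℝ) : ℂ) * qq θ (t + s₁))‖ ≤ (1 / β) * M := by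
    have hg : IntegrableOn (fun t : ℝ => Real.exp (-β * t) * M) (Ioi 0) :=
      (exp_neg_integrableOn_Ioi 0 hβ).mul_const _
    have hae : ∀ᵐ t ∂(volume.restrict (Ioi (0:ℝ))),
        ‖((Real.exp (-β * t) : ℝ) : ℂ) * qq θ (t + s₂)
          - ((Real.exp (-β * t) : ℝ) : ℂ) * qq θ (t + s₁)‖ ≤ Real.exp (-β * t) * M := by
      rw [ae_restrict_iff' measurableSet_Ioi]
      filter_upwards with t ht
      have ht0 : (0:ℝ) < t := ht
      rw [← mul_sub]
      rw [norm_mul, Complex.norm_real, Real.norm_eq_abs,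
        abs_of_pos (Real.exp_pos _)]
      apply mul_le_mul_of_nonneg_left _ (le_of_lt (Real.exp_pos _))
      have := qq_mvt θ s₁ hs₁ (a := t + s₁) (b := t + s₂) (by linarith) (by linarith)
      calc ‖qq θ (t + s₂) - qq θ (t + s₁)‖
          ≤ ((t + s₂) - (t + s₁)) / (2 * (Real.cosh s₁ + Real.cos θ)) := this
        _ = M := by rw [hM]; ring_nf
    refine (norm_integral_le_of_norm_le hg hae).trans (le_of_eq ?_)
    rw [integral_mul_const, int_exp_Ioi β hβ]
  have h1 : ‖qq θ s₁ - qq θ s₂‖ ≤ M := by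
    rw [norm_sub_rev]
    simpa [hM] using qq_mvt θ s₁ hs₁ (a := s₁) (b := s₂) le_rfl (le_of_lt hs)
  calc ‖P s₂ - P s₁‖
      ≤ ‖qq θ s₁ - qq θ s₂‖
        + ‖(β : ℂ) * ((∫ t in Ioi (0:ℝ), ((Real.exp (-β * t) : ℝ) : ℂ) * qq θ (t + s₂))
          - (∫ t in Ioi (0:ℝ), ((Real.exp (-β * t) : ℝ) : ℂ) * qq θ (t + s₁)))‖ := by
        rw [hdiff]; exact norm_add_le _ _
    _ ≤ M + β * ((1 / β) * M) := by
        apply add_le_add h1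
        rw [norm_mul, Complex.norm_real, Real.norm_eq_abs, abs_of_pos hβ, hsub]
        exact mul_le_mul_of_nonneg_left (by simpa using hIbound)
          (le_of_lt hβ)
    _ = (s₂ - s₁) / (Real.cosh s₁ + Real.cos θ) := by
        rw [hM]; field_simp; ring
end

section
/- Let a₀>0, 0<a<a₀, 0<τ<1, θ∈(-π,π]. Then |a₀ Σ_{m=1}^∞ τ^{m-1} e^{-ma₀+a+iθ}/(1+e^{-ma₀+a+iθ})² − P(e^{-(a₀-a)+iθ}; −(ln τ)/a₀)| ≤ 4a₀/(cosh(a₀-a)+cos θ), where P(e^{-s+iθ};β) := ∫₀^∞ e^{-βt} p_θ'(t+s)dt with p_θ(t)=1/(1+e^{-t+iθ}). -/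
open MeasureTheory Set Filter


lemma aux_iUnion_Ioc : (⋃ n : ℕ, Ioc (n : ℝ) (n + 1)) = Ioi (0 : ℝ) := by
  ext x
  simp only [mem_iUnion, mem_Ioc, mem_Ioi]
  constructor
  · rintro ⟨n, hn, -⟩; exact lt_of_le_of_lt (Nat.cast_nonneg n) hn
  · intro hx
    have h1 : 1 ≤ ⌈x⌉₊ := Nat.one_le_ceil_iff.mpr hx
    refine ⟨⌈x⌉₊ - 1, ?_, ?_⟩
    · have h2 : (⌈x⌉₊ : ℝ) < x + 1 := Nat.ceil_lt_add_one hx.le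
      rw [Nat.cast_sub h1]
      push_cast
      linarith
    · have : ((⌈x⌉₊ - 1 : ℕ) : ℝ) + 1 = (⌈x⌉₊ : ℝ) := by
        rw [Nat.cast_sub h1]; push_cast; ring
      rw [this]; exact Nat.le_ceil x

lemma aux_disjoint_Ioc : Pairwise (Function.onFun Disjoint (fun n : ℕ => Ioc (n : ℝ) (n + 1))) := by
  intro m n hmn
  simp only [Function.onFun]
  rw [Set.Ioc_disjoint_Ioc]
  rcases hmn.lt_or_gt with h | h
  · refine le_trans (min_le_left _ _) (le_max_of_le_right ?_)
    have : (m : ℝ) + 1 ≤ (n : ℝ) := by exact_mod_cast Nat.succ_le_of_lt h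
    exact this
  · refine le_trans (min_le_right _ _) (le_max_of_le_left ?_)
    have : (n : ℝ) + 1 ≤ (m : ℝ) := by exact_mod_cast Nat.succ_le_of_lt h
    exact this

lemma norm_tsum_sub_integral_le (g g' : ℝ → ℂ)
    (hderiv : ∀ x ∈ Ici (0:ℝ), HasDerivAt g (g' x) x)
    (hgint : IntegrableOn g (Ioi 0))
    (hg'int : IntegrableOn g' (Ioi 0))
    (hgsum : Summable fun m : ℕ => g m) :
    ‖(∑' m : ℕ, g m) - ∫ t in Ioi (0:ℝ), g t‖ ≤ ∫ t in Ioi (0:ℝ), ‖g' t‖ := by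
  set S : ℕ → Set ℝ := fun n => Ioc (n : ℝ) (n + 1) with hS
  have hUnion : (⋃ n, S n) = Ioi (0 : ℝ) := aux_iUnion_Ioc
  have hmeas : ∀ n, MeasurableSet (S n) := fun n => measurableSet_Ioc
  have hSsub : ∀ n : ℕ, S n ⊆ Ioi (0 : ℝ) := fun n x hx =>
    lt_of_le_of_lt (Nat.cast_nonneg n) hx.1
  have hsum1 : HasSum (fun n => ∫ t in S n, g t) (∫ t in Ioi (0:ℝ), g t) := by
    have := hasSum_integral_iUnion hmeas aux_disjoint_Ioc (hUnion ▸ hgint)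
    rwa [hUnion] at this
  have hsum2 : HasSum (fun n => ∫ t in S n, ‖g' t‖) (∫ t in Ioi (0:ℝ), ‖g' t‖) := by
    have := hasSum_integral_iUnion hmeas aux_disjoint_Ioc (hUnion ▸ hg'int.norm)
    rwa [hUnion] at this
  have hvol : ∀ n : ℕ, (volume (S n)).toReal = 1 := by
    intro n
    rw [hS]
    simp [Real.volume_Ioc]
  have key : ∀ n : ℕ, ‖g n - ∫ t in S n, g t‖ ≤ ∫ t in S n, ‖g' t‖ := by
    intro n
    have hg'in : IntegrableOn (fun t => ‖g' t‖) (S n) :=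
      (hg'int.mono_set (hSsub n)).norm
    have hgin : IntegrableOn g (S n) := hgint.mono_set (hSsub n)
    have hpt : ∀ t ∈ S n, ‖g n - g t‖ ≤ ∫ x in S n, ‖g' x‖ := by
      intro t ht
      have hnt : (n : ℝ) ≤ t := ht.1.le
      have hioc : Ioc (n : ℝ) t ⊆ Ioi (0 : ℝ) := fun x hx =>
        lt_of_le_of_lt (Nat.cast_nonneg n) hx.1
      have hint' : IntervalIntegrable g' volume (n : ℝ) t := by
        rw [intervalIntegrable_iff_integrableOn_Ioc_of_le hnt]
        exact hg'int.mono_set hioc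
      have hftc : ∫ x in (n : ℝ)..t, g' x = g t - g n := by
        refine intervalIntegral.integral_eq_sub_of_hasDerivAt (fun x hx => ?_) hint'
        refine hderiv x ?_
        rw [uIcc_of_le hnt] at hx
        exact le_trans (Nat.cast_nonneg n) hx.1
      have h0 : ‖g n - g t‖ = ‖∫ x in (n : ℝ)..t, g' x‖ := by
        rw [hftc, norm_sub_rev]
      rw [h0]
      calc ‖∫ x in (n : ℝ)..t, g' x‖ ≤ ∫ x in (n : ℝ)..t, ‖g' x‖ :=
            intervalIntegral.norm_integral_le_integral_norm hnt
        _ = ∫ x in Ioc (n : ℝ) t, ‖g' x‖ := intervalIntegral.integral_of_le hnt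
        _ ≤ ∫ x in S n, ‖g' x‖ := by
            refine setIntegral_mono_set hg'in ?_ ?_
            · exact Eventually.of_forall fun x => norm_nonneg _
            · exact HasSubset.Subset.eventuallyLE (Ioc_subset_Ioc_right ht.2)
    have hconstint : IntegrableOn (fun _ : ℝ => g n) (S n) := by
      exact integrableOn_const (by rw [hS]; exact measure_Ioc_lt_top.ne)
    have hconst : (∫ _ in S n, g n) = g n := by
      rw [setIntegral_const, measureReal_def, hvol n, one_smul]
    calc ‖g n - ∫ t in S n, g t‖ = ‖∫ t in S n, (g n - g t)‖ := by
          rw [integral_sub hconstint hgin, hconst]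
      _ ≤ ∫ t in S n, ‖g n - g t‖ := norm_integral_le_integral_norm _
      _ ≤ ∫ _ in S n, (∫ x in S n, ‖g' x‖) := by
          refine setIntegral_mono_on ((hconstint.sub hgin).norm) ?_ (hmeas n) hpt
          exact integrableOn_const (by rw [hS]; exact measure_Ioc_lt_top.ne)
      _ = ∫ x in S n, ‖g' x‖ := by rw [setIntegral_const, measureReal_def, hvol n, one_smul]
  have hsumnorm : Summable fun n : ℕ => ‖g n - ∫ t in S n, g t‖ :=
    Summable.of_nonneg_of_le (fun n => norm_nonneg _) key hsum2.summable
  have hsummable_a : Summable fun n : ℕ => (g n - ∫ t in S n, g t) :=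
    Summable.of_norm hsumnorm
  have hsplit : (∑' m : ℕ, g m) - (∫ t in Ioi (0:ℝ), g t)
      = ∑' n : ℕ, (g n - ∫ t in S n, g t) := by
    rw [Summable.tsum_sub hgsum hsum1.summable, hsum1.tsum_eq]
  rw [hsplit]
  calc ‖∑' n : ℕ, (g n - ∫ t in S n, g t)‖ ≤ ∑' n : ℕ, ‖g n - ∫ t in S n, g t‖ :=
        norm_tsum_le_tsum_norm hsumnorm
    _ ≤ ∑' n : ℕ, ∫ t in S n, ‖g' t‖ := Summable.tsum_le_tsum key hsumnorm hsum2.summable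
    _ = ∫ t in Ioi (0:ℝ), ‖g' t‖ := hsum2.tsum_eq

noncomputable section

lemma exp_re_im (θ x : ℝ) :
    (Complex.exp (-(x:ℂ) + θ*Complex.I)).re = Real.exp (-x) * Real.cos θ ∧
    (Complex.exp (-(x:ℂ) + θ*Complex.I)).im = Real.exp (-x) * Real.sin θ := by
  have hre : (-(x:ℂ) + θ*Complex.I).re = -x := by simp
  have him : (-(x:ℂ) + θ*Complex.I).im = θ := by simp
  constructor
  · rw [Complex.exp_re, hre, him]
  · rw [Complex.exp_im, hre, him]

lemma normSq_one_add_exp (θ x : ℝ) :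
    Complex.normSq (1 + Complex.exp (-(x:ℂ) + θ*Complex.I))
      = 2 * Real.exp (-x) * (Real.cosh x + Real.cos θ) := by
  obtain ⟨hre, him⟩ := exp_re_im θ x
  rw [Complex.normSq_apply]
  simp only [Complex.add_re, Complex.add_im, Complex.one_re, Complex.one_im, hre, him]
  rw [Real.cosh_eq]
  have h1 : Real.exp (-x) * Real.exp x = 1 := by rw [← Real.exp_add]; simp
  have h2 := Real.sin_sq_add_cos_sq θ
  linear_combination Real.exp (-x)^2 * h2 - h1

lemma normSq_exp_sub_one (θ x : ℝ) :
    Complex.normSq (Complex.exp (-(x:ℂ) + θ*Complex.I) - 1)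
      = 2 * Real.exp (-x) * (Real.cosh x - Real.cos θ) := by
  obtain ⟨hre, him⟩ := exp_re_im θ x
  rw [Complex.normSq_apply]
  simp only [Complex.sub_re, Complex.sub_im, Complex.one_re, Complex.one_im, hre, him]
  rw [Real.cosh_eq]
  have h1 : Real.exp (-x) * Real.exp x = 1 := by rw [← Real.exp_add]; simp
  have h2 := Real.sin_sq_add_cos_sq θ
  linear_combination Real.exp (-x)^2 * h2 - h1

lemma one_add_exp_ne_zero (θ x : ℝ) (hx : 0 < x) :
    1 + Complex.exp (-(x:ℂ) + θ*Complex.I) ≠ 0 := by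
  rw [← Complex.normSq_pos, normSq_one_add_exp]
  have h1 : 1 < Real.cosh x := Real.one_lt_cosh.mpr hx.ne'
  have h2 : -1 ≤ Real.cos θ := Real.neg_one_le_cos θ
  have := Real.exp_pos (-x)
  nlinarith

lemma abs_p' (θ x : ℝ) (hx : 0 < x) :
    ‖Complex.exp (-(x:ℂ) + θ*Complex.I) /
        (1 + Complex.exp (-(x:ℂ) + θ*Complex.I))^2‖
      = 1 / (2 * (Real.cosh x + Real.cos θ)) := by
  have habs : ‖Complex.exp (-(x:ℂ) + θ*Complex.I)‖ = Real.exp (-x) := by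
    rw [Complex.norm_exp]; simp
  have hA : 0 < Real.cosh x + Real.cos θ := by
    have h1 : 1 < Real.cosh x := Real.one_lt_cosh.mpr hx.ne'
    have h2 : -1 ≤ Real.cos θ := Real.neg_one_le_cos θ
    linarith
  rw [norm_div, norm_pow, habs]
  rw [Complex.sq_norm, normSq_one_add_exp]
  rw [div_eq_div_iff (by positivity) (by positivity)]
  ring

end

lemma sqrt_add_le' {a b : ℝ} (ha : 0 ≤ a) (hb : 0 ≤ b) :
    Real.sqrt (a + b) ≤ Real.sqrt a + Real.sqrt b := by
  have h : a + b ≤ (Real.sqrt a + Real.sqrt b)^2 := by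
    nlinarith [Real.sq_sqrt ha, Real.sq_sqrt hb, Real.sqrt_nonneg a, Real.sqrt_nonneg b]
  calc Real.sqrt (a+b) ≤ Real.sqrt ((Real.sqrt a + Real.sqrt b)^2) := Real.sqrt_le_sqrt h
    _ = Real.sqrt a + Real.sqrt b := Real.sqrt_sq (by positivity)

lemma hasDerivAt_E (θ x : ℝ) :
    HasDerivAt (fun y : ℝ => Complex.exp (-(y:ℂ) + θ*Complex.I))
      (-Complex.exp (-(x:ℂ) + θ*Complex.I)) x := by
  have h0 : HasDerivAt (fun y : ℝ => (y:ℂ)) 1 x := by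
    exact (hasDerivAt_id x).ofReal_comp.congr_deriv (by simp)
  have h1 : HasDerivAt (fun y : ℝ => -(y:ℂ) + θ*Complex.I) (-1) x :=
    h0.neg.add_const _
  have := h1.cexp
  convert this using 1
  ring

lemma hasDerivAt_p' (θ x : ℝ) (hx : 0 < x) :
    HasDerivAt (fun y : ℝ => Complex.exp (-(y:ℂ) + θ*Complex.I) /
        (1 + Complex.exp (-(y:ℂ) + θ*Complex.I))^2)
      ((Complex.exp (-(x:ℂ) + θ*Complex.I)^2 - Complex.exp (-(x:ℂ) + θ*Complex.I)) /
        (1 + Complex.exp (-(x:ℂ) + θ*Complex.I))^3) x := by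
  have hE := hasDerivAt_E θ x
  have hne : 1 + Complex.exp (-(x:ℂ) + θ*Complex.I) ≠ 0 := one_add_exp_ne_zero θ x hx
  have h1 : HasDerivAt (fun y : ℝ => 1 + Complex.exp (-(y:ℂ) + θ*Complex.I))
      (-Complex.exp (-(x:ℂ) + θ*Complex.I)) x := hE.const_add 1
  have hden : HasDerivAt (fun y : ℝ => (1 + Complex.exp (-(y:ℂ) + θ*Complex.I))^2)
      (-Complex.exp (-(x:ℂ) + θ*Complex.I) * (1 + Complex.exp (-(x:ℂ) + θ*Complex.I)) +
        (1 + Complex.exp (-(x:ℂ) + θ*Complex.I)) * (-Complex.exp (-(x:ℂ) + θ*Complex.I))) x := by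
    have := h1.mul h1; simp only [pow_two]; exact this
  have h := hE.div hden (pow_ne_zero 2 hne)
  refine h.congr_deriv ?_
  field_simp
  ring

lemma abs_q_le (θ x : ℝ) (hx : 0 < x) :
    ‖(Complex.exp (-(x:ℂ) + θ*Complex.I)^2 - Complex.exp (-(x:ℂ) + θ*Complex.I)) /
        (1 + Complex.exp (-(x:ℂ) + θ*Complex.I))^3‖
      ≤ Real.sinh x / (2 * (Real.cosh x + Real.cos θ)^2)
        + (Real.sqrt 2 / 2) *
          (1 / ((Real.cosh x + Real.cos θ) * Real.sqrt (Real.cosh x + Real.cos θ))) := by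
  set A := Real.cosh x + Real.cos θ with hA
  set D := Real.cosh x - Real.cos θ with hD
  set r := Real.exp (-x) with hr
  have hcosh1 : 1 < Real.cosh x := Real.one_lt_cosh.mpr hx.ne'
  have hcos1 : Real.cos θ ≤ 1 := Real.cos_le_one θ
  have hcos1' : -1 ≤ Real.cos θ := Real.neg_one_le_cos θ
  have hApos : 0 < A := by rw [hA]; linarith
  have hDpos : 0 < D := by rw [hD]; linarith
  have hrpos : 0 < r := Real.exp_pos _
  have hsA : 0 < Real.sqrt A := Real.sqrt_pos.mpr hApos
  have hsinh : 0 < Real.sinh x := Real.sinh_pos_iff.mpr hx  -- check name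
  -- Step 1: exact value
  have habsE : ‖Complex.exp (-(x:ℂ) + θ*Complex.I)‖ = r := by
    rw [Complex.norm_exp]; simp [hr]
  have habsEm1 : ‖Complex.exp (-(x:ℂ) + θ*Complex.I) - 1‖
      = Real.sqrt (2*r*D) := by
    rw [Complex.norm_def, normSq_exp_sub_one, hr, hD]
  have habs1E : ‖1 + Complex.exp (-(x:ℂ) + θ*Complex.I)‖
      = Real.sqrt (2*r*A) := by
    rw [Complex.norm_def, normSq_one_add_exp, hr, hA]
  have hnum : Complex.exp (-(x:ℂ) + θ*Complex.I)^2 - Complex.exp (-(x:ℂ) + θ*Complex.I)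
      = Complex.exp (-(x:ℂ) + θ*Complex.I) * (Complex.exp (-(x:ℂ) + θ*Complex.I) - 1) := by
    ring
  have hval : ‖(Complex.exp (-(x:ℂ) + θ*Complex.I)^2 -
        Complex.exp (-(x:ℂ) + θ*Complex.I)) /
        (1 + Complex.exp (-(x:ℂ) + θ*Complex.I))^3‖
      = Real.sqrt D / (2 * A * Real.sqrt A) := by
    rw [norm_div, norm_pow, hnum, norm_mul, habsE, habsEm1, habs1E]
    have h2r : (0:ℝ) ≤ 2*r := by linarith
    have e1 : Real.sqrt (2*r*D) = Real.sqrt (2*r) * Real.sqrt D := by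
      rw [Real.sqrt_mul h2r]
    have e2 : Real.sqrt (2*r*A) = Real.sqrt (2*r) * Real.sqrt A := by
      rw [Real.sqrt_mul h2r]
    have hs2r : 0 < Real.sqrt (2*r) := Real.sqrt_pos.mpr (by linarith)
    have e3 : Real.sqrt (2*r) ^ 2 = 2*r := Real.sq_sqrt h2r
    have e4 : Real.sqrt A ^ 2 = A := Real.sq_sqrt hApos.le
    rw [e1, e2, mul_pow]
    have e5 : Real.sqrt (2*r) ^ 3 = (2*r) * Real.sqrt (2*r) := by
      rw [pow_succ, e3]
    have e6 : Real.sqrt A ^ 3 = A * Real.sqrt A := by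
      rw [pow_succ, e4]
    rw [e5, e6, div_eq_div_iff (by positivity) (by positivity)]
    ring
  rw [hval]
  -- Step 2: sqrt D bound
  have hDsplit : D = (Real.cosh x - 1) + (1 - Real.cos θ) := by rw [hD]; ring
  have h1 : Real.sqrt D ≤ Real.sqrt (Real.cosh x - 1) + Real.sqrt (1 - Real.cos θ) := by
    rw [hDsplit]
    exact sqrt_add_le' (by linarith) (by linarith)
  have h2 : Real.sqrt (Real.cosh x - 1) ≤ Real.sinh x / Real.sqrt A := by
    rw [le_div_iff₀ hsA]
    have : Real.sqrt (Real.cosh x - 1) * Real.sqrt A = Real.sqrt ((Real.cosh x - 1) * A) := by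
      rw [Real.sqrt_mul (by linarith)]
    rw [this]
    have hle : (Real.cosh x - 1) * A ≤ Real.sinh x ^ 2 := by
      have hs : Real.sinh x ^ 2 = Real.cosh x ^ 2 - 1 := by
        have := Real.cosh_sq_sub_sinh_sq x  -- cosh^2 - sinh^2 = 1 ; check name
        linarith
      rw [hs, hA]; nlinarith
    calc Real.sqrt ((Real.cosh x - 1) * A) ≤ Real.sqrt (Real.sinh x ^ 2) :=
          Real.sqrt_le_sqrt hle
      _ = Real.sinh x := Real.sqrt_sq hsinh.le
  have h3 : Real.sqrt (1 - Real.cos θ) ≤ Real.sqrt 2 :=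
    Real.sqrt_le_sqrt (by linarith)
  have hsAA : Real.sqrt A * Real.sqrt A = A := Real.mul_self_sqrt hApos.le
  calc Real.sqrt D / (2 * A * Real.sqrt A)
      ≤ (Real.sinh x / Real.sqrt A + Real.sqrt 2) / (2 * A * Real.sqrt A) := by
        apply (div_le_div_iff_of_pos_right (by positivity)).mpr
        linarith [h1, h2, h3]
    _ = Real.sinh x / (2 * A^2) + (Real.sqrt 2 / 2) * (1 / (A * Real.sqrt A)) := by
        rw [add_div, div_div]
        have hden : Real.sqrt A * (2*A*Real.sqrt A) = 2*A^2 := by nlinarith [hsAA]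
        rw [hden, mul_one_div, div_div, ← mul_assoc]

noncomputable section

lemma cosh_ge_one_add (y : ℝ) (hy : 0 ≤ y) : 1 + y^2/8 ≤ Real.cosh y := by
  have h1 : 1 + y/2 ≤ Real.exp (y/2) := by linarith [Real.add_one_le_exp (y/2)]
  have h2 : (1 + y/2)^2 ≤ (Real.exp (y/2))^2 := by nlinarith [Real.exp_pos (y/2)]
  have h3 : (Real.exp (y/2))^2 = Real.exp y := by
    rw [sq, ← Real.exp_add]; norm_num
  have h4 : 1 - y ≤ Real.exp (-y) := by linarith [Real.add_one_le_exp (-y)]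
  rw [Real.cosh_eq]
  nlinarith [h2, h3, h4]

lemma cosh_add_ge (y s : ℝ) (hy : 0 ≤ y) (hs : 0 ≤ s) :
    Real.cosh s + y^2/8 ≤ Real.cosh (y + s) := by
  have hcy := cosh_ge_one_add y hy
  have hcs := Real.one_le_cosh s
  have hsy : 0 ≤ Real.sinh y := Real.sinh_nonneg_iff.mpr hy
  have hss : 0 ≤ Real.sinh s := Real.sinh_nonneg_iff.mpr hs
  rw [Real.cosh_add]
  nlinarith [mul_nonneg hsy hss, sq_nonneg y,
    mul_nonneg (by nlinarith [sq_nonneg y] : (0:ℝ) ≤ Real.cosh y - 1) (by linarith : (0:ℝ) ≤ Real.cosh s - 1)]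

section pieces

variable {a₀ s u : ℝ}

-- Piece 1 : exponential
lemma exp_piece (L : ℝ) (hL : L < 0) :
    (∫ t in Ioi (0:ℝ), -L * Real.exp (L*t)) = 1 ∧
      IntegrableOn (fun t => -L * Real.exp (L*t)) (Ioi (0:ℝ)) := by
  have hderiv : ∀ x ∈ Ici (0:ℝ), HasDerivAt (fun t => -Real.exp (L*t)) (-L * Real.exp (L*x)) x := by
    intro x _
    have : HasDerivAt (fun t : ℝ => L*t) L x := by
      simpa using (hasDerivAt_id x).const_mul L
    have h2 := this.exp
    have h3 := h2.neg
    refine h3.congr_deriv ?_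
    ring
  have hpos : ∀ x ∈ Ioi (0:ℝ), 0 ≤ -L * Real.exp (L*x) := fun x _ => by
    have := Real.exp_pos (L*x); nlinarith
  have htend : Tendsto (fun t => -Real.exp (L*t)) atTop (nhds 0) := by
    rw [show (0:ℝ) = -0 by norm_num]
    apply Tendsto.neg
    apply Real.tendsto_exp_atBot.comp
    exact tendsto_id.const_mul_atTop_of_neg hL
  constructor
  · have := integral_Ioi_of_hasDerivAt_of_nonneg' hderiv hpos htend
    simpa using this
  · exact integrableOn_Ioi_deriv_of_nonneg' hderiv hpos htend

-- Piece 2 : cosh derivative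
lemma cosh_piece (ha₀ : 0 < a₀) (hs : 0 < s) (hu : -1 ≤ u) :
    (∫ t in Ioi (0:ℝ), a₀ * Real.sinh (a₀*t+s) / (2 * (Real.cosh (a₀*t+s) + u)^2))
        = 1 / (2*(Real.cosh s + u)) ∧
      IntegrableOn (fun t => a₀ * Real.sinh (a₀*t+s) / (2 * (Real.cosh (a₀*t+s) + u)^2))
        (Ioi (0:ℝ)) := by
  have hApos : ∀ x : ℝ, 0 ≤ x → 0 < Real.cosh (a₀*x+s) + u := by
    intro x hx
    have h1 : 1 < Real.cosh (a₀*x+s) := Real.one_lt_cosh.mpr (by nlinarith)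
    linarith
  have hderiv : ∀ x ∈ Ici (0:ℝ),
      HasDerivAt (fun t => -(2 * (Real.cosh (a₀*t+s) + u))⁻¹)
        (a₀ * Real.sinh (a₀*x+s) / (2 * (Real.cosh (a₀*x+s) + u)^2)) x := by
    intro x hx
    have haff : HasDerivAt (fun t : ℝ => a₀*t+s) a₀ x := by
      simpa using ((hasDerivAt_id x).const_mul a₀).add_const s
    have hcosh : HasDerivAt (fun t : ℝ => Real.cosh (a₀*t+s)) (Real.sinh (a₀*x+s) * a₀) x :=
      by have := (Real.hasDerivAt_cosh (a₀*x+s)).comp x haff; exact this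
    have hinner : HasDerivAt (fun t : ℝ => 2 * (Real.cosh (a₀*t+s) + u))
        (2 * (Real.sinh (a₀*x+s) * a₀)) x := (hcosh.add_const u).const_mul 2
    have hne : 2 * (Real.cosh (a₀*x+s) + u) ≠ 0 := by
      have := hApos x hx; positivity
    have := (hinner.inv hne).neg
    refine this.congr_deriv ?_
    have hC := (hApos x hx).ne'
    field_simp
  have hpos : ∀ x ∈ Ioi (0:ℝ),
      0 ≤ a₀ * Real.sinh (a₀*x+s) / (2 * (Real.cosh (a₀*x+s) + u)^2) := by
    intro x hx
    have h1 : 0 ≤ Real.sinh (a₀*x+s) := Real.sinh_nonneg_iff.mpr (by nlinarith [hx.out])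
    have h2 := hApos x (le_of_lt hx.out)
    positivity
  have htend : Tendsto (fun t => -(2 * (Real.cosh (a₀*t+s) + u))⁻¹) atTop (nhds 0) := by
    rw [show (0:ℝ) = -0 by norm_num]
    apply Tendsto.neg
    apply Tendsto.inv_tendsto_atTop
    have hbase : Tendsto (fun t : ℝ => Real.exp (a₀*t+s) / 2 + u) atTop atTop := by
      apply tendsto_atTop_add_const_right
      apply Tendsto.atTop_div_const (by norm_num)
      exact Real.tendsto_exp_atTop.comp
        (tendsto_atTop_add_const_right _ s (tendsto_id.const_mul_atTop ha₀))
    apply tendsto_atTop_mono ?_ (Tendsto.const_mul_atTop (by norm_num : (0:ℝ) < 2) hbase)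
    intro t
    have : Real.exp (a₀*t+s) / 2 ≤ Real.cosh (a₀*t+s) := by
      rw [Real.cosh_eq]
      have := Real.exp_pos (-(a₀*t+s))
      linarith
    nlinarith
  constructor
  · have hval := integral_Ioi_of_hasDerivAt_of_nonneg' hderiv hpos htend
    rw [hval, show a₀*(0:ℝ)+s = s by ring, zero_sub, neg_neg, one_div]
  · exact integrableOn_Ioi_deriv_of_nonneg' hderiv hpos htend

end pieces

end

noncomputable section
open MeasureTheory Set Filter

lemma tendsto_y_div_sqrt {c : ℝ} (hc : 0 < c) :
    Tendsto (fun y : ℝ => y / Real.sqrt (c + y^2/8)) atTop (nhds (Real.sqrt 8)) := by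
  have h2 : Tendsto (fun y : ℝ => c / y^2) atTop (nhds 0) :=
    Tendsto.div_atTop tendsto_const_nhds (tendsto_pow_atTop two_ne_zero)
  have h1 : Tendsto (fun y : ℝ => c / y^2 + 1/8) atTop (nhds (0 + 1/8)) :=
    h2.add tendsto_const_nhds
  have h3 : Tendsto (fun y : ℝ => Real.sqrt (c / y^2 + 1/8)) atTop (nhds (Real.sqrt (0 + 1/8))) :=
    (Real.continuous_sqrt.continuousAt).tendsto.comp h1
  have h4 : Tendsto (fun y : ℝ => (Real.sqrt (c / y^2 + 1/8))⁻¹) atTop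
      (nhds ((Real.sqrt (0 + 1/8))⁻¹)) := h3.inv₀ (by positivity)
  have h5 : (Real.sqrt ((0:ℝ) + 1/8))⁻¹ = Real.sqrt 8 := by
    rw [zero_add, ← Real.sqrt_inv]; norm_num
  rw [← h5]
  apply h4.congr'
  filter_upwards [eventually_gt_atTop (0:ℝ)] with y hy
  have hy2 : (0:ℝ) < y^2 := by positivity
  have hS : 0 < c / y^2 + 1/8 := by positivity
  have hrw : c + y^2/8 = y^2 * (c/y^2 + 1/8) := by field_simp
  rw [hrw, Real.sqrt_mul (by positivity), Real.sqrt_sq hy.le]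
  rw [eq_comm]
  field_simp

lemma sqrt_piece {a₀ c : ℝ} (ha₀ : 0 < a₀) (hc : 0 < c) :
    (∫ t in Ioi (0:ℝ), a₀ / ((c + (a₀*t)^2/8) * Real.sqrt (c + (a₀*t)^2/8)))
        = 2 * Real.sqrt 2 / c ∧
      IntegrableOn (fun t => a₀ / ((c + (a₀*t)^2/8) * Real.sqrt (c + (a₀*t)^2/8)))
        (Ioi (0:ℝ)) := by
  have hvpos : ∀ x : ℝ, 0 < c + (a₀*x)^2/8 := by intro x; positivity
  have hderiv : ∀ x ∈ Ici (0:ℝ),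
      HasDerivAt (fun t => (a₀*t) / (c * Real.sqrt (c + (a₀*t)^2/8)))
        (a₀ / ((c + (a₀*x)^2/8) * Real.sqrt (c + (a₀*x)^2/8))) x := by
    intro x _
    have haff : HasDerivAt (fun t : ℝ => a₀*t) a₀ x := by
      simpa using (hasDerivAt_id x).const_mul a₀
    have hv : HasDerivAt (fun t : ℝ => c + (a₀*t)^2/8) (2*(a₀*x)^1*a₀/8) x := by
      exact (((haff.pow 2).div_const 8).const_add c)
    have hw0 : 0 < Real.sqrt (c + (a₀*x)^2/8) := Real.sqrt_pos.mpr (hvpos x)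
    have hsq : HasDerivAt (fun t : ℝ => Real.sqrt (c + (a₀*t)^2/8))
        ((2*(a₀*x)^1*a₀/8) / (2 * Real.sqrt (c + (a₀*x)^2/8))) x :=
      hv.sqrt (hvpos x).ne'
    have hden : HasDerivAt (fun t : ℝ => c * Real.sqrt (c + (a₀*t)^2/8))
        (c * ((2*(a₀*x)^1*a₀/8) / (2 * Real.sqrt (c + (a₀*x)^2/8)))) x := hsq.const_mul c
    have hdenne : c * Real.sqrt (c + (a₀*x)^2/8) ≠ 0 := by positivity
    have h := haff.div hden hdenne
    refine (h.congr_deriv ?_)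
    symm
    set v : ℝ := c + (a₀*x)^2/8 with hvdef
    set w : ℝ := Real.sqrt v with hwdef
    have hww : w * w = v := Real.mul_self_sqrt (hvpos x).le
    have hwne : w ≠ 0 := hw0.ne'
    rw [div_eq_div_iff (by positivity) (by positivity)]
    field_simp
    linear_combination (-a₀^2*x^2) * hww
  have hpos : ∀ x ∈ Ioi (0:ℝ),
      0 ≤ a₀ / ((c + (a₀*x)^2/8) * Real.sqrt (c + (a₀*x)^2/8)) := by
    intro x _
    have := hvpos x
    positivity
  have h8 : Real.sqrt 8 = 2*Real.sqrt 2 := by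
    rw [show (8:ℝ) = 2^2*2 by norm_num, Real.sqrt_mul (by positivity), Real.sqrt_sq (by norm_num)]
  have htend : Tendsto (fun t => (a₀*t) / (c * Real.sqrt (c + (a₀*t)^2/8))) atTop
      (nhds (2*Real.sqrt 2/c)) := by
    have hcomp : Tendsto (fun t : ℝ => a₀*t) atTop atTop := tendsto_id.const_mul_atTop ha₀
    have h1 := (tendsto_y_div_sqrt hc).comp hcomp
    have h2 := h1.div_const c
    rw [h8] at h2
    apply h2.congr
    intro t
    simp only [Function.comp]
    rw [div_div, mul_comm (Real.sqrt _) c]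
  constructor
  · have hval := integral_Ioi_of_hasDerivAt_of_nonneg' hderiv hpos htend
    rw [hval]
    norm_num
  · exact integrableOn_Ioi_deriv_of_nonneg' hderiv hpos htend

end

set_option maxHeartbeats 1000000 in
/-- Summation formula: the series a₀ Σ_{m≥1} τ^{m-1} p_θ'(m a₀ - a) is close to
P(e^{-(a₀-a)+iθ}; -(ln τ)/a₀) with error at most 4a₀/(cosh(a₀-a)+cos θ). -/
theorem summation_formula (a₀ a τ θ : ℝ) (ha₀ : 0 < a₀) (ha : 0 < a) (haa : a < a₀)
    (hτ₁ : 0 < τ) (hτ₂ : τ < 1) (hθ₁ : -Real.pi < θ) (hθ₂ : θ ≤ Real.pi)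
    (p' : ℝ → ℂ)
    (hp' : ∀ t, p' t = Complex.exp (-(t : ℂ) + θ * Complex.I) /
        (1 + Complex.exp (-(t : ℂ) + θ * Complex.I)) ^ 2) :
    ‖((a₀ : ℂ) * (∑' m : ℕ, (τ : ℂ) ^ m * p' ((m + 1) * a₀ - a)) -
        ∫ t in Set.Ioi (0:ℝ),
          ((Real.exp (-(-Real.log τ / a₀) * t) : ℝ) : ℂ) * p' (t + (a₀ - a)))‖ ≤
      4 * a₀ / (Real.cosh (a₀ - a) + Real.cos θ) := by
  have hpe : p' = fun t : ℝ => Complex.exp (-(t:ℂ) + θ*Complex.I) /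
      (1 + Complex.exp (-(t:ℂ) + θ*Complex.I))^2 := funext hp'
  subst hpe
  set P : ℝ → ℂ := fun t : ℝ => Complex.exp (-(t:ℂ) + θ*Complex.I) /
      (1 + Complex.exp (-(t:ℂ) + θ*Complex.I))^2 with hPdef
  set s := a₀ - a with hsdef
  have hs0 : 0 < s := by rw [hsdef]; linarith
  have hu1 : Real.cos θ ≤ 1 := Real.cos_le_one θ
  have hu1' : -1 ≤ Real.cos θ := Real.neg_one_le_cos θ
  have hcosh1 : 1 < Real.cosh s := Real.one_lt_cosh.mpr hs0.ne'
  have hcpos : 0 < Real.cosh s + Real.cos θ := by linarith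
  set L := Real.log τ with hLdef
  have hLneg : L < 0 := Real.log_neg hτ₁ hτ₂
  set q : ℝ → ℂ := fun x : ℝ => (Complex.exp (-(x:ℂ) + θ*Complex.I)^2 -
      Complex.exp (-(x:ℂ) + θ*Complex.I)) / (1 + Complex.exp (-(x:ℂ) + θ*Complex.I))^3 with hqdef
  set g : ℝ → ℂ := fun t : ℝ => ((Real.exp (L*t) : ℝ) : ℂ) * P (a₀*t + s) with hgdef
  set g' : ℝ → ℂ := fun t : ℝ => ((L * Real.exp (L*t) : ℝ) : ℂ) * P (a₀*t + s)
      + ((Real.exp (L*t) : ℝ) : ℂ) * ((a₀:ℂ) * q (a₀*t + s)) with hg'def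
  have hargpos : ∀ t : ℝ, 0 ≤ t → 0 < a₀*t + s := fun t ht => by nlinarith
  -- derivative of g
  have hgderiv : ∀ t ∈ Ici (0:ℝ), HasDerivAt g (g' t) t := by
    intro t ht
    have hφre : HasDerivAt (fun t : ℝ => Real.exp (L*t)) (Real.exp (L*t) * L) t := by
      have h1 : HasDerivAt (fun t : ℝ => L*t) L t := by
        simpa using (hasDerivAt_id t).const_mul L
      exact h1.exp
    have hφ : HasDerivAt (fun t : ℝ => ((Real.exp (L*t) : ℝ) : ℂ))
        ((L * Real.exp (L*t) : ℝ) : ℂ) t := by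
      have := hφre.ofReal_comp
      convert this using 2
      push_cast
      ring
    have haff : HasDerivAt (fun t : ℝ => a₀*t + s) a₀ t := by
      simpa using ((hasDerivAt_id t).const_mul a₀).add_const s
    have hψ : HasDerivAt (fun t : ℝ => P (a₀*t + s)) ((a₀:ℂ) * q (a₀*t + s)) t := by
      have hP' := hasDerivAt_p' θ (a₀*t + s) (hargpos t ht)
      have := HasDerivAt.scomp (𝕜 := ℝ) t hP' haff
      exact this.congr_deriv (by rw [Complex.real_smul])
    exact hφ.mul hψ
  -- continuity facts
  have hEcont : Continuous (fun x : ℝ => Complex.exp (-(x:ℂ) + θ*Complex.I)) :=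
    ((Complex.continuous_ofReal.neg).add continuous_const).cexp
  have hPcont : ContinuousOn P (Ioi (0:ℝ)) := by
    apply ContinuousOn.div hEcont.continuousOn ((continuous_const.add hEcont).pow 2).continuousOn
    intro x hx
    exact pow_ne_zero 2 (one_add_exp_ne_zero θ x hx)
  have hqcont : ContinuousOn q (Ioi (0:ℝ)) := by
    apply ContinuousOn.div (((hEcont.pow 2).sub hEcont).continuousOn)
      ((continuous_const.add hEcont).pow 3).continuousOn
    intro x hx
    exact pow_ne_zero 3 (one_add_exp_ne_zero θ x hx)
  have haffmaps : MapsTo (fun t : ℝ => a₀*t + s) (Ioi 0) (Ioi 0) := by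
    intro t ht
    exact hargpos t (le_of_lt ht)
  have haffcont : Continuous (fun t : ℝ => a₀*t + s) := by continuity
  have hexpLc : Continuous (fun t : ℝ => Real.exp (L*t)) :=
    Real.continuous_exp.comp (continuous_const.mul continuous_id)
  have hg'cont : ContinuousOn g' (Ioi (0:ℝ)) := by
    apply ContinuousOn.add
    · exact ((Complex.continuous_ofReal.comp (continuous_const.mul hexpLc)).continuousOn).mul
        (hPcont.comp haffcont.continuousOn haffmaps)
    · exact ((Complex.continuous_ofReal.comp hexpLc).continuousOn).mul
        ((continuousOn_const).mul (hqcont.comp haffcont.continuousOn haffmaps))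
  have hgcont : ContinuousOn g (Ioi (0:ℝ)) := fun t ht =>
    ((hgderiv t (Set.mem_Ici.mpr (le_of_lt ht))).continuousAt).continuousWithinAt
  -- pointwise facts
  have hPabs : ∀ x : ℝ, 0 < x → ‖P x‖ = 1/(2*(Real.cosh x + Real.cos θ)) :=
    fun x hx => abs_p' θ x hx
  have habsq : ∀ x : ℝ, 0 < x → ‖q x‖ ≤ Real.sinh x / (2 * (Real.cosh x + Real.cos θ)^2)
      + (Real.sqrt 2 / 2) * (1 / ((Real.cosh x + Real.cos θ) * Real.sqrt (Real.cosh x + Real.cos θ))) :=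
    fun x hx => abs_q_le θ x hx
  have hPle : ∀ t : ℝ, 0 < t →
      ‖P (a₀*t+s)‖ ≤ 1/(2*(Real.cosh s + Real.cos θ)) := by
    intro t ht
    rw [hPabs _ (hargpos t ht.le)]
    have hmono : Real.cosh s ≤ Real.cosh (a₀*t+s) := by
      rw [Real.cosh_le_cosh, abs_of_pos hs0, abs_of_pos (hargpos t ht.le)]
      nlinarith
    exact one_div_le_one_div_of_le (by linarith) (by linarith)
  -- the majorant
  set M : ℝ → ℝ := fun t =>
      (-L * Real.exp (L*t)) * (1/(2*(Real.cosh s + Real.cos θ)))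
      + a₀ * Real.sinh (a₀*t+s) / (2 * (Real.cosh (a₀*t+s) + Real.cos θ)^2)
      + (Real.sqrt 2/2) * (a₀ / (((Real.cosh s + Real.cos θ) + (a₀*t)^2/8) *
          Real.sqrt ((Real.cosh s + Real.cos θ) + (a₀*t)^2/8))) with hMdef
  obtain ⟨hint1, hint1'⟩ := exp_piece L hLneg
  obtain ⟨hint2, hint2'⟩ := cosh_piece (a₀ := a₀) (s := s) (u := Real.cos θ) ha₀ hs0 hu1'
  obtain ⟨hint3, hint3'⟩ := sqrt_piece (a₀ := a₀) (c := Real.cosh s + Real.cos θ) ha₀ hcpos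
  have hM1' : IntegrableOn (fun t => (-L * Real.exp (L*t)) * (1/(2*(Real.cosh s + Real.cos θ))))
      (Ioi (0:ℝ)) := hint1'.mul_const _
  have hM3' : IntegrableOn (fun t => (Real.sqrt 2/2) * (a₀ /
      (((Real.cosh s + Real.cos θ) + (a₀*t)^2/8) *
        Real.sqrt ((Real.cosh s + Real.cos θ) + (a₀*t)^2/8)))) (Ioi (0:ℝ)) :=
    hint3'.const_mul _
  have hMint : IntegrableOn M (Ioi (0:ℝ)) := (hM1'.add hint2').add hM3'
  have h22 : Real.sqrt 2 ^ 2 = 2 := Real.sq_sqrt (by norm_num)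
  have hMval : (∫ t in Ioi (0:ℝ), M t) = 3 / (Real.cosh s + Real.cos θ) := by
    rw [hMdef]
    have hadd1 := integral_add (μ := volume.restrict (Ioi (0:ℝ))) hM1' hint2'
    have hadd2 := integral_add (μ := volume.restrict (Ioi (0:ℝ))) (hM1'.add hint2') hM3'
    simp only [Pi.add_apply] at hadd1 hadd2
    rw [hadd2, hadd1, integral_mul_const, hint1, integral_const_mul, hint2, hint3]
    field_simp
    linear_combination 2 * h22
  -- pointwise bound by the majorant
  have hMpt : ∀ t ∈ Ioi (0:ℝ), ‖g' t‖ ≤ M t := by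
    intro t ht
    have ht0 : (0:ℝ) < t := ht
    have hx : 0 < a₀*t + s := hargpos t ht0.le
    have hVpos : 0 < (Real.cosh s + Real.cos θ) + (a₀*t)^2/8 := by
      have := sq_nonneg (a₀*t)
      linarith
    have hAV : (Real.cosh s + Real.cos θ) + (a₀*t)^2/8 ≤ Real.cosh (a₀*t+s) + Real.cos θ := by
      have := cosh_add_ge (a₀*t) s (by positivity) hs0.le
      linarith
    have hApos : 0 < Real.cosh (a₀*t+s) + Real.cos θ := lt_of_lt_of_le hVpos hAV
    have f1 : ‖g' t‖ ≤ (-L) * Real.exp (L*t) * ‖P (a₀*t+s)‖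
        + Real.exp (L*t) * (a₀ * ‖q (a₀*t+s)‖) := by
      simp only [hg'def]
      refine (norm_add_le _ _).trans ?_
      simp only [norm_mul, Complex.norm_real, Real.norm_eq_abs]
      rw [abs_of_neg hLneg, abs_of_pos (Real.exp_pos _), abs_of_pos ha₀]
    have f4 : 1 / ((Real.cosh (a₀*t+s) + Real.cos θ) *
          Real.sqrt (Real.cosh (a₀*t+s) + Real.cos θ))
        ≤ 1 / ((((Real.cosh s + Real.cos θ) + (a₀*t)^2/8)) *
          Real.sqrt ((Real.cosh s + Real.cos θ) + (a₀*t)^2/8)) := by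
      apply one_div_le_one_div_of_le (mul_pos hVpos (Real.sqrt_pos.mpr hVpos))
      exact mul_le_mul hAV (Real.sqrt_le_sqrt hAV) (Real.sqrt_nonneg _) hApos.le
    have f5 : Real.exp (L*t) ≤ 1 := by
      rw [Real.exp_le_one_iff]
      exact mul_nonpos_iff.mpr (Or.inr ⟨hLneg.le, ht0.le⟩)
    have c1 : (-L) * Real.exp (L*t) * ‖P (a₀*t+s)‖
        ≤ (-L) * Real.exp (L*t) * (1/(2*(Real.cosh s + Real.cos θ))) := by
      exact mul_le_mul_of_nonneg_left (hPle t ht0)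
        (mul_nonneg (neg_nonneg.mpr hLneg.le) (Real.exp_pos _).le)
    have c2 : ‖q (a₀*t+s)‖ ≤ Real.sinh (a₀*t+s) / (2 * (Real.cosh (a₀*t+s) + Real.cos θ)^2)
        + (Real.sqrt 2/2) * (1 / ((((Real.cosh s + Real.cos θ) + (a₀*t)^2/8)) *
            Real.sqrt ((Real.cosh s + Real.cos θ) + (a₀*t)^2/8))) := by
      refine (habsq (a₀*t+s) hx).trans ?_
      have := mul_le_mul_of_nonneg_left f4 (by positivity : (0:ℝ) ≤ Real.sqrt 2/2)
      linarith
    have c3 : Real.exp (L*t) * (a₀ * ‖q (a₀*t+s)‖)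
        ≤ a₀ * ‖q (a₀*t+s)‖ := by
      exact mul_le_of_le_one_left (mul_nonneg ha₀.le (norm_nonneg _)) f5
    have c4 : a₀ * ‖q (a₀*t+s)‖ ≤ a₀ * (Real.sinh (a₀*t+s) / (2 * (Real.cosh (a₀*t+s) + Real.cos θ)^2)
        + (Real.sqrt 2/2) * (1 / ((((Real.cosh s + Real.cos θ) + (a₀*t)^2/8)) *
            Real.sqrt ((Real.cosh s + Real.cos θ) + (a₀*t)^2/8)))) :=
      mul_le_mul_of_nonneg_left c2 ha₀.le
    have hMt : M t = (-L) * Real.exp (L*t) * (1/(2*(Real.cosh s + Real.cos θ)))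
        + a₀ * (Real.sinh (a₀*t+s) / (2 * (Real.cosh (a₀*t+s) + Real.cos θ)^2)
        + (Real.sqrt 2/2) * (1 / ((((Real.cosh s + Real.cos θ) + (a₀*t)^2/8)) *
            Real.sqrt ((Real.cosh s + Real.cos θ) + (a₀*t)^2/8)))) := by
      rw [hMdef]
      ring
    rw [hMt]
    linarith
  -- integrability of g'
  have hg'int : IntegrableOn g' (Ioi (0:ℝ)) := by
    apply Integrable.mono' hMint (hg'cont.aestronglyMeasurable measurableSet_Ioi)
    rw [ae_restrict_iff' measurableSet_Ioi]
    exact Eventually.of_forall hMpt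
  -- integrability of g
  have hexpint : IntegrableOn (fun t => Real.exp (L*t)) (Ioi (0:ℝ)) := by
    have h := hint1'.const_mul (-L)⁻¹
    have heq : (fun t => (-L)⁻¹ * (-L * Real.exp (L*t))) = fun t => Real.exp (L*t) := by
      funext t
      have hL0 : L ≠ 0 := hLneg.ne
      field_simp
    rwa [heq] at h
  have hgnorm : ∀ t : ℝ, 0 < t → ‖g t‖ ≤ Real.exp (L*t) * (1/(2*(Real.cosh s + Real.cos θ))) := by
    intro t ht
    simp only [hgdef]
    simp only [norm_mul, Complex.norm_real, Real.norm_eq_abs]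
    rw [abs_of_pos (Real.exp_pos _)]
    exact mul_le_mul_of_nonneg_left (hPle t ht) (Real.exp_pos _).le
  have hgint : IntegrableOn g (Ioi (0:ℝ)) := by
    apply Integrable.mono' (hexpint.mul_const (1/(2*(Real.cosh s + Real.cos θ))))
      (hgcont.aestronglyMeasurable measurableSet_Ioi)
    rw [ae_restrict_iff' measurableSet_Ioi]
    exact Eventually.of_forall (fun t ht => hgnorm t ht)
  -- summability
  have hτm : ∀ m : ℕ, Real.exp (L*(m:ℝ)) = τ^m := by
    intro m
    rw [mul_comm, Real.exp_nat_mul, hLdef, Real.exp_log hτ₁]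
  have hgsum : Summable (fun m : ℕ => g m) := by
    apply Summable.of_norm_bounded
      ((summable_geometric_of_lt_one hτ₁.le hτ₂).mul_left (1/(2*(Real.cosh s + Real.cos θ))))
    intro m
    rcases Nat.eq_zero_or_pos m with hm | hm
    · subst hm
      simp only [hgdef]
      simp only [Nat.cast_zero, mul_zero, Real.exp_zero, pow_zero, mul_one, zero_add,
        Complex.ofReal_one, one_mul]
      rw [hPabs s hs0]
    · have h1 := hgnorm (m:ℝ) (by exact_mod_cast hm)
      rw [hτm m] at h1
      calc ‖g (m:ℝ)‖ ≤ τ^m * (1/(2*(Real.cosh s + Real.cos θ))) := h1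
        _ = (1/(2*(Real.cosh s + Real.cos θ))) * τ^m := by ring
  -- core estimate
  have hcore := norm_tsum_sub_integral_le g g' hgderiv hgint hg'int hgsum
  have hbound : (∫ t in Ioi (0:ℝ), ‖g' t‖) ≤ 3 / (Real.cosh s + Real.cos θ) := by
    rw [← hMval]
    exact setIntegral_mono_on hg'int.norm hMint measurableSet_Ioi hMpt
  -- rewrite the sum
  have hsum_eq : (∑' m : ℕ, (τ:ℂ)^m * P (((m:ℝ)+1)*a₀ - a)) = ∑' m : ℕ, g m := by
    apply tsum_congr
    intro m
    simp only [hgdef]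
    have harg : ((m:ℝ)+1)*a₀ - a = a₀*(m:ℝ) + s := by rw [hsdef]; ring
    rw [harg, hτm m]
    push_cast
    ring
  -- rewrite the integral
  have hint_eq : (∫ t in Ioi (0:ℝ), ((Real.exp (-(-L/a₀)*t) : ℝ) : ℂ) * P (t + s))
      = (a₀:ℂ) * ∫ t in Ioi (0:ℝ), g t := by
    have h := integral_comp_mul_left_Ioi
      (fun t : ℝ => ((Real.exp (-(-L/a₀)*t) : ℝ) : ℂ) * P (t + s)) 0 ha₀
    rw [mul_zero] at h
    have h3 : (∫ x in Ioi (0:ℝ),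
          (fun t : ℝ => ((Real.exp (-(-L/a₀)*t) : ℝ) : ℂ) * P (t + s)) (a₀*x))
        = ∫ x in Ioi (0:ℝ), g x := by
      refine integral_congr_ae (Eventually.of_forall fun x => ?_)
      simp only [hgdef]
      have ha₀' : a₀ ≠ 0 := ha₀.ne'
      congr 2
      field_simp
    rw [h3] at h
    rw [h, Complex.real_smul]
    push_cast
    rw [← mul_assoc, mul_inv_cancel₀ (by exact_mod_cast ha₀.ne'), one_mul]
  rw [hsum_eq, hint_eq, ← mul_sub, norm_mul, Complex.norm_real, Real.norm_eq_abs, abs_of_pos ha₀]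
  calc a₀ * ‖(∑' m : ℕ, g m) - ∫ t in Ioi (0:ℝ), g t‖
      ≤ a₀ * (3 / (Real.cosh s + Real.cos θ)) :=
        mul_le_mul_of_nonneg_left (hcore.trans hbound) ha₀.le
    _ ≤ 4 * a₀ / (Real.cosh s + Real.cos θ) := by
        rw [show a₀ * (3 / (Real.cosh s + Real.cos θ)) = 3*a₀ / (Real.cosh s + Real.cos θ) by ring]
        gcongr
        linarith
end
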